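/- Let d ≥ 2, let X be a random vector in ℝ^d distributed according to the standard Gaussian measure N(0, I_d), and let v ∈ ℝ^d be a fixed unit vector. Then for every τ ∈ [0, 1], the probability that |⟨X, v⟩| ≥ τ‖X‖ is at most 2·exp(−(d−1)τ²/2); in particular, the cosine similarity between X and v is tightly concentrated around zero in high dimension. -/

import Mathlib

open MeasureTheory Real
open scoped RealInnerProductSpace ENNReal

/-- The standard Gaussian measure `N(0, I_d)` on `ℝ^d`, realized as `EuclideanSpace ℝ (Fin d)`:
the product of `d` one-dimensional standard normal distributions. -/
noncomputable def stdGaussian (d : ℕ) : Measure (EuclideanSpace ℝ (Fin d)) :=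
  (Measure.pi fun _ : Fin d => ProbabilityTheory.gaussianReal 0 1).map
    (MeasurableEquiv.toLp 2 (Fin d → ℝ))

/-!
Rotating `v` to the first vector of an orthonormal basis, the event becomes `τ² ∑ᵢ yᵢ² ≤ y₀²`
for independent standard normal coordinates `y₀, …, y_m`, i.e. `c W ≤ y₀²` with
`W = ∑_{i ≥ 1} yᵢ²` and `c = τ² / (1 - τ²)`. For fixed `W` the sub-Gaussian tail bound gives
probability at most `2 exp (-c W / 2) = 2 ∏_{i ≥ 1} exp (-c yᵢ² / 2)`, and each factor has
expectation `(1 + c)^(-1/2) = (1 - τ²)^(1/2)`. Hence the probability is at most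
`2 (1 - τ²)^(m/2) ≤ 2 exp (-m τ² / 2)`; the case `τ = 1` follows by letting `τ → 1`.
-/

open ProbabilityTheory Module Topology
open scoped NNReal

lemma hasSubgaussianMGF_gaussianReal (v : ℝ≥0) :
    HasSubgaussianMGF (fun x => x) v (gaussianReal 0 v) where
  integrable_exp_mul := integrable_exp_mul_gaussianReal
  mgf_le t := by simp [mgf_fun_id_gaussianReal]

lemma gaussianReal_real_abs_ge_le (v : ℝ≥0) {a : ℝ} (ha : 0 ≤ a) :
    (gaussianReal 0 v).real {z | a ≤ |z|} ≤ 2 * exp (-a ^ 2 / (2 * v)) := by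
  have hsplit : {z : ℝ | a ≤ |z|} = {z | a ≤ z} ∪ {z | a ≤ -z} := by
    ext z
    simp [le_abs', or_comm, le_neg]
  have h := hasSubgaussianMGF_gaussianReal v
  rw [hsplit, two_mul]
  exact (measureReal_union_le _ _).trans
    (add_le_add (h.measure_ge_le ha) (h.neg.measure_ge_le ha))

lemma integral_exp_neg_mul_sq_gaussianReal (c : ℝ) :
    ∫ x, exp (-c * x ^ 2 / 2) ∂gaussianReal 0 1 = (√(1 + c))⁻¹ := by
  have h (x : ℝ) : gaussianPDFReal 0 1 x * exp (-c * x ^ 2 / 2)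
      = (√(2 * π))⁻¹ * exp (-((1 + c) / 2) * x ^ 2) := by
    rw [gaussianPDFReal, mul_assoc, ← exp_add]
    congr 2 <;> simp; ring
  simp_rw [integral_gaussianReal_eq_integral_smul one_ne_zero, smul_eq_mul, h,
    integral_const_mul, integral_gaussian]
  rw [← sqrt_inv, ← sqrt_mul (by positivity), ← sqrt_inv]
  congr 1
  field_simp

lemma gaussianReal_prod_pi_mul_sum_sq_le_sq_le {ι : Type*} [Fintype ι] {c : ℝ} (hc : 0 ≤ c) :
    ((gaussianReal 0 1).prod (Measure.pi fun _ : ι => gaussianReal 0 1))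
        {p | c * ∑ i, p.2 i ^ 2 ≤ p.1 ^ 2}
      ≤ ENNReal.ofReal (2 * (√(1 + c))⁻¹ ^ Fintype.card ι) := by
  set γ := gaussianReal 0 1
  set A := {p : ℝ × (ι → ℝ) | c * ∑ i, p.2 i ^ 2 ≤ p.1 ^ 2}
  have hsection (w : ι → ℝ) :
      γ ((fun z => (z, w)) ⁻¹' A) ≤ ENNReal.ofReal (2 * ∏ i, exp (-c * w i ^ 2 / 2)) := by
    have hW : 0 ≤ c * ∑ i, w i ^ 2 := by positivity
    have hA : (fun z => (z, w)) ⁻¹' A = {z | √(c * ∑ i, w i ^ 2) ≤ |z|} := by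
      ext z
      simp only [A, Set.mem_preimage, Set.mem_ofPred_eq]
      rw [← sqrt_sq_eq_abs, sqrt_le_sqrt_iff (sq_nonneg z)]
    rw [hA, ← ofReal_measureReal]
    refine ENNReal.ofReal_le_ofReal ((gaussianReal_real_abs_ge_le 1 (sqrt_nonneg _)).trans_eq ?_)
    rw [sq_sqrt hW, ← exp_sum, Finset.mul_sum]
    simp [Finset.sum_div, neg_div]
  have hfactor : Integrable (fun x : ℝ => exp (-c * x ^ 2 / 2)) γ := by
    refine Integrable.of_bound (by fun_prop) 1 (ae_of_all _ fun x => ?_)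
    rw [norm_of_nonneg (exp_nonneg _), exp_le_one_iff]
    have := mul_nonneg hc (sq_nonneg x)
    linarith
  calc _ = ∫⁻ w, γ ((fun z => (z, w)) ⁻¹' A) ∂Measure.pi fun _ => γ :=
        Measure.prod_apply_symm (measurableSet_le (by fun_prop) (by fun_prop))
    _ ≤ ∫⁻ w, ENNReal.ofReal (2 * ∏ i, exp (-c * w i ^ 2 / 2)) ∂Measure.pi fun _ => γ :=
        lintegral_mono hsection
    _ = ENNReal.ofReal (2 * (√(1 + c))⁻¹ ^ Fintype.card ι) := by
        rw [← ofReal_integral_eq_lintegral_ofReal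
            ((Integrable.fintype_prod fun _ => hfactor).const_mul 2)
            (ae_of_all _ fun w => by positivity),
          integral_const_mul, integral_fintype_prod_eq_pow (fun x : ℝ => exp (-c * x ^ 2 / 2)),
          integral_exp_neg_mul_sq_gaussianReal]

lemma pi_gaussianReal_mul_sum_sq_le_sq_zero_le {m : ℕ} {τ : ℝ} (hτ : τ ^ 2 < 1) :
    Measure.pi (fun _ : Fin (m + 1) => gaussianReal 0 1) {y | τ ^ 2 * ∑ i, y i ^ 2 ≤ y 0 ^ 2}
      ≤ ENNReal.ofReal (2 * √(1 - τ ^ 2) ^ m) := by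
  have hpos : 0 < 1 - τ ^ 2 := by linarith
  set c := τ ^ 2 / (1 - τ ^ 2)
  have hset : {y : Fin (m + 1) → ℝ | τ ^ 2 * ∑ i, y i ^ 2 ≤ y 0 ^ 2}
      = MeasurableEquiv.piFinSuccAbove (fun _ => ℝ) 0 ⁻¹' {p | c * ∑ i, p.2 i ^ 2 ≤ p.1 ^ 2} := by
    ext y
    simp only [Set.mem_preimage, Set.mem_ofPred_eq, Fin.sum_univ_succ, c, div_mul_eq_mul_div,
      div_le_iff₀ hpos]
    change _ ↔ _ * ∑ i : Fin m, y i.succ ^ 2 ≤ y 0 ^ 2 * _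
    constructor <;> intro h <;> linarith
  have hsqrt : (√(1 + c))⁻¹ = √(1 - τ ^ 2) := by
    rw [← sqrt_inv, show 1 + c = (1 - τ ^ 2)⁻¹ by simp only [c]; field_simp; ring, inv_inv]
  rw [hset, (measurePreserving_piFinSuccAbove (fun _ => gaussianReal 0 1) 0).measure_preimage
    (measurableSet_le (by fun_prop) (by fun_prop)).nullMeasurableSet, ← hsqrt]
  simpa using gaussianReal_prod_pi_mul_sum_sq_le_sq_le (ι := Fin m) (by positivity : 0 ≤ c)

section InnerProductSpace

variable {E : Type*} [NormedAddCommGroup E] [InnerProductSpace ℝ E] [FiniteDimensional ℝ E]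
  [MeasurableSpace E] [BorelSpace E]

lemma stdGaussian_le_abs_inner_eq_pi {m : ℕ} (hE : finrank ℝ E = m + 1) {v : E} (hv : ‖v‖ = 1)
    {τ : ℝ} (hτ : 0 ≤ τ) :
    stdGaussian E {x | τ * ‖x‖ ≤ |⟪x, v⟫|}
      = Measure.pi (fun _ : Fin (m + 1) => gaussianReal 0 1)
          {y | τ ^ 2 * ∑ i, y i ^ 2 ≤ y 0 ^ 2} := by
  obtain ⟨b, hb⟩ := Orthonormal.exists_orthonormalBasis_extension_of_card_eq (𝕜 := ℝ)
    (v := fun _ : Fin (m + 1) => v) (s := {0}) (by simpa using hE)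
    (orthonormal_subsingleton_iff.2 fun _ => hv)
  rw [stdGaussian_eq_map_pi_orthonormalBasis b, Measure.map_apply (by fun_prop)
    (measurableSet_le (by fun_prop) (by fun_prop))]
  congr 1
  ext y
  have hy : ∑ i, y i • b i = b.repr.symm (WithLp.toLp 2 y) := b.sum_repr_symm _
  have hnorm : ‖∑ i, y i • b i‖ ^ 2 = ∑ i, y i ^ 2 := by
    rw [hy, LinearIsometryEquiv.norm_map, EuclideanSpace.real_norm_sq_eq]
  have hinner : ⟪∑ i, y i • b i, v⟫ = y 0 := by
    rw [hy, ← hb 0 rfl, real_inner_comm, ← b.repr_apply_apply,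
      LinearIsometryEquiv.apply_symm_apply]
  simp only [Set.mem_preimage, Set.mem_ofPred_eq, hinner]
  rw [← sq_le_sq₀ (by positivity) (abs_nonneg _), mul_pow, hnorm, sq_abs]

lemma stdGaussian_real_le_abs_inner_le_of_lt_one {m : ℕ} (hE : finrank ℝ E = m + 1) {v : E}
    (hv : ‖v‖ = 1) {τ : ℝ} (hτ0 : 0 ≤ τ) (hτ1 : τ < 1) :
    (stdGaussian E).real {x | τ * ‖x‖ ≤ |⟪x, v⟫|} ≤ 2 * exp (-(m * τ ^ 2 / 2)) := by
  have hsqrt : √(1 - τ ^ 2) ≤ exp (-τ ^ 2 / 2) := by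
    rw [exp_half]
    exact sqrt_le_sqrt (by linarith [add_one_le_exp (-τ ^ 2)])
  refine ENNReal.toReal_le_of_le_ofReal (by positivity) ?_
  rw [stdGaussian_le_abs_inner_eq_pi hE hv hτ0]
  refine (pi_gaussianReal_mul_sum_sq_le_sq_zero_le (by nlinarith)).trans
    (ENNReal.ofReal_le_ofReal ?_)
  calc 2 * √(1 - τ ^ 2) ^ m ≤ 2 * exp (-τ ^ 2 / 2) ^ m := by gcongr
    _ = 2 * exp (-(m * τ ^ 2 / 2)) := by rw [← exp_nat_mul]; ring_nf

theorem stdGaussian_real_le_abs_inner_le {v : E} (hv : ‖v‖ = 1) {τ : ℝ}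
    (hτ : τ ∈ Set.Icc (0 : ℝ) 1) :
    (stdGaussian E).real {x | τ * ‖x‖ ≤ |⟪x, v⟫|}
      ≤ 2 * exp (-(((finrank ℝ E : ℝ) - 1) * τ ^ 2 / 2)) := by
  have : Nontrivial E := nontrivial_of_ne v 0 (by rintro rfl; simp at hv)
  obtain ⟨m, hm⟩ := Nat.exists_eq_add_one_of_ne_zero (finrank_pos (R := ℝ) (M := E)).ne'
  rw [hm, Nat.cast_add_one, add_sub_cancel_right]
  rcases hτ.2.lt_or_eq with hτ1 | rfl
  · exact stdGaussian_real_le_abs_inner_le_of_lt_one hm hv hτ.1 hτ1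
  · refine ge_of_tendsto (x := 𝓝[<] (1 : ℝ))
      (Continuous.continuousWithinAt (f := fun t : ℝ => 2 * exp (-(m * t ^ 2 / 2)))
        (by fun_prop)) ?_
    filter_upwards [Ioo_mem_nhdsLT zero_lt_one] with t ht
    refine (measureReal_mono fun x hx => ?_).trans
      (stdGaussian_real_le_abs_inner_le_of_lt_one (τ := t) hm hv ht.1.le ht.2)
    exact (mul_le_mul_of_nonneg_right ht.2.le (norm_nonneg x)).trans hx

end InnerProductSpace

lemma stdGaussian_eq_stdGaussian_euclideanSpace (d : ℕ) :
    _root_.stdGaussian d = ProbabilityTheory.stdGaussian (EuclideanSpace ℝ (Fin d)) :=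
  map_pi_eq_stdGaussian

theorem gaussian_abs_cosine_prob_le_two_exp_general (d : ℕ)
    (v : EuclideanSpace ℝ (Fin d)) (hv : ‖v‖ = 1)
    (τ : ℝ) (hτ : τ ∈ Set.Icc (0 : ℝ) 1) :
    (stdGaussian d {x | τ * ‖x‖ ≤ |⟪x, v⟫|}).toReal
      ≤ 2 * Real.exp (-(((d : ℝ) - 1) * τ ^ 2 / 2)) := by
  rw [stdGaussian_eq_stdGaussian_euclideanSpace]
  have h := stdGaussian_real_le_abs_inner_le hv hτ
  rwa [finrank_euclideanSpace_fin] at h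

/-- **Two-sided exponential bound.** For `d ≥ 2`, a standard Gaussian vector `X` in `ℝ^d` and a
fixed unit vector `v`, for every `τ ∈ [0, 1]` the probability that `|⟪X, v⟫| ≥ τ‖X‖`
(i.e. that the absolute cosine similarity of `X` and `v` is at least `τ`) is at most
`2·exp(-(d-1)τ²/2)`: the cosine similarity concentrates around zero in high dimension. -/
theorem gaussian_abs_cosine_prob_le_two_exp (d : ℕ) (hd : 2 ≤ d)
    (v : EuclideanSpace ℝ (Fin d)) (hv : ‖v‖ = 1)
    (τ : ℝ) (hτ : τ ∈ Set.Icc (0 : ℝ) 1) :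
    (stdGaussian d {x | τ * ‖x‖ ≤ |⟪x, v⟫|}).toReal
      ≤ 2 * Real.exp (-(((d : ℝ) - 1) * τ ^ 2 / 2)) :=
  gaussian_abs_cosine_prob_le_two_exp_general d v hv τ hτ
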